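/- arXiv:1611.02327 — 3 statements merged into one kernel-verified Lean document; each statement's English description precedes it below -/
import Mathlib

section
/- Let T : X ⇉ X* be a pseudomonotone operator. Then the closed convex hull of Z_T with respect to the weak topology σ(X, X*) is contained in Z_{T^ρ}. -/
open NormedSpace

section PseudoDefs

variable {X : Type*} [NormedAddCommGroup X] [NormedSpace ℝ X]

/-- `(x,x*) ∼_p (y,y*)`: the pseudomonotone relation. -/
def PseudoRel (p q : X × StrongDual ℝ X) : Prop :=
  min (q.2 (p.1 - q.1)) (p.2 (q.1 - p.1)) < 0 ∨
    (q.2 (p.1 - q.1) = 0 ∧ p.2 (q.1 - p.1) = 0)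

/-- An operator (identified with its graph) is pseudomonotone if any two of its
elements are pseudomonotonically related. -/
def Pseudomonotone (T : Set (X × StrongDual ℝ X)) : Prop :=
  ∀ p ∈ T, ∀ q ∈ T, PseudoRel p q

/-- The pseudomonotone polar `T^ρ`. -/
def pPolar (T : Set (X × StrongDual ℝ X)) : Set (X × StrongDual ℝ X) :=
  {p | ∀ q ∈ T, PseudoRel p q}

/-- The monotone polar `T^μ`. -/
def mPolar (T : Set (X × StrongDual ℝ X)) : Set (X × StrongDual ℝ X) :=
  {p | ∀ q ∈ T, 0 ≤ (p.2 - q.2) (p.1 - q.1)}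

/-- A monotone operator. -/
def MonotoneOp (T : Set (X × StrongDual ℝ X)) : Prop :=
  ∀ p ∈ T, ∀ q ∈ T, 0 ≤ (p.2 - q.2) (p.1 - q.1)

/-- The image `T(x)` of an operator at a point. -/
def img (T : Set (X × StrongDual ℝ X)) (x : X) : Set (StrongDual ℝ X) :=
  {x' | (x, x') ∈ T}

/-- The domain of an operator. -/
def opDom (T : Set (X × StrongDual ℝ X)) : Set X :=
  {x | (img T x).Nonempty}

/-- The set of zeros `Z_T` of an operator. -/
def zeros (T : Set (X × StrongDual ℝ X)) : Set X :=
  {x | (x, (0 : StrongDual ℝ X)) ∈ T}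

/-- The strict conic hull `cone_∘(A)` of a subset of the dual. -/
def coneS (A : Set (StrongDual ℝ X)) : Set (StrongDual ℝ X) :=
  {v | ∃ t : ℝ, 0 < t ∧ ∃ a ∈ A, v = t • a}

/-- The conic hull `cone(A)` of a subset of the dual. -/
def coneH (A : Set (StrongDual ℝ X)) : Set (StrongDual ℝ X) :=
  {v | ∃ t : ℝ, 0 ≤ t ∧ ∃ a ∈ A, v = t • a}

/-- The operator `cone_∘(T)`, with `(cone_∘(T))(x) = cone_∘(T(x))`. -/
def coneOp (T : Set (X × StrongDual ℝ X)) : Set (X × StrongDual ℝ X) :=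
  {p | p.2 ∈ coneS (img T p.1)}

/-- The normal cone `N_C(x)`. -/
def normalCone (C : Set X) (x : X) : Set (StrongDual ℝ X) :=
  {x' | ∀ y ∈ C, x' (y - x) ≤ 0}

/-- The strict normal cone `N°_C(x)`. -/
def strictNormalCone (C : Set X) (x : X) : Set (StrongDual ℝ X) :=
  {x' | ∀ y ∈ C, x' (y - x) < 0}

/-- `V_T(x) = {y : ∃ y* ∈ T(y), ⟨x - y, y*⟩ > 0}`. -/
def Vset (T : Set (X × StrongDual ℝ X)) (x : X) : Set X :=
  {y | ∃ y' ∈ img T y, 0 < y' (x - y)}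

/-- `W_T(x) = {y : ∃ y* ∈ T(y), ⟨x - y, y*⟩ = 0}`. -/
def Wset (T : Set (X × StrongDual ℝ X)) (x : X) : Set X :=
  {y | ∃ y' ∈ img T y, y' (x - y) = 0}

/-- Maximal pseudomonotonicity. -/
def MaxPseudomonotone (T : Set (X × StrongDual ℝ X)) : Prop :=
  Pseudomonotone T ∧ ∀ S : Set (X × StrongDual ℝ X), T ⊆ S → Pseudomonotone S → T = S

/-- Pre-maximal pseudomonotonicity: both `T` and `T^ρ` are pseudomonotone. -/
def PreMaxPseudomonotone (T : Set (X × StrongDual ℝ X)) : Prop :=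
  Pseudomonotone T ∧ Pseudomonotone (pPolar T)

/-- The restriction `T|_A` of an operator to a set `A`. -/
def restrictOp (T : Set (X × StrongDual ℝ X)) (A : Set X) : Set (X × StrongDual ℝ X) :=
  {p ∈ T | p.1 ∈ A}

/-- `L(T,x) = {y : ∃ y* ∈ T(y), ⟨x - y, y*⟩ ≥ 0}`. -/
def Lset (T : Set (X × StrongDual ℝ X)) (x : X) : Set X :=
  {y | ∃ y' ∈ img T y, 0 ≤ y' (x - y)}

/-- The operator `T̂ `: `T̂(x) = N_{L(T,x)}(x)` on `Z_T`, `cone_∘(T(x))` on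
`dom(T) \ Z_T`, and `∅` outside `dom(T)`. -/
def hatOp (T : Set (X × StrongDual ℝ X)) : Set (X × StrongDual ℝ X) :=
  {p | (p.1 ∈ zeros T ∧ p.2 ∈ normalCone (Lset T p.1) p.1) ∨
       (p.1 ∈ opDom T ∧ p.1 ∉ zeros T ∧ p.2 ∈ coneS (img T p.1))}

/-- Two operators are equivalent: same domain, same zeros, and the same conic
hulls of images outside the set of zeros. -/
def EquivOp (T S : Set (X × StrongDual ℝ X)) : Prop :=
  opDom T = opDom S ∧ zeros T = zeros S ∧
    ∀ x ∈ opDom T \ zeros T, coneH (img T x) = coneH (img S x)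

/-- `D`-maximal pseudomonotonicity (Hadjisavvas): `T` is pseudomonotone and some
equivalent pseudomonotone operator has no proper pseudomonotone extension with
the same domain. -/
def DMaxPseudomonotone (T : Set (X × StrongDual ℝ X)) : Prop :=
  Pseudomonotone T ∧ ∃ S : Set (X × StrongDual ℝ X), EquivOp T S ∧ Pseudomonotone S ∧
    ∀ S' : Set (X × StrongDual ℝ X), S ⊆ S' → Pseudomonotone S' → opDom S' = opDom S → S' = S

/-- The solution set of the Stampacchia variational inequality problem. -/
def SVIsol (T : Set (X × StrongDual ℝ X)) (K : Set X) : Set X :=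
  {x ∈ K | ∃ x' ∈ img T x, ∀ y ∈ K, 0 ≤ x' (y - x)}

/-- The solution set of the Minty variational inequality problem. -/
def MVIsol (T : Set (X × StrongDual ℝ X)) (K : Set X) : Set X :=
  {x ∈ K | ∀ q ∈ T, q.1 ∈ K → q.2 (x - q.1) ≤ 0}

/-- The linear perturbation `T + α*`. -/
def pertOp (T : Set (X × StrongDual ℝ X)) (α : StrongDual ℝ X) : Set (X × StrongDual ℝ X) :=
  {p | ∃ q ∈ T, p = (q.1, q.2 + α)}

end PseudoDefs

/-! The zeros of `T^ρ` are the solutions `x` of the Minty inequalities `⟨x - y, y*⟩ ≤ 0`,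
`(y, y*) ∈ T`: an intersection of closed half-spaces, hence a weakly closed convex set. It
contains `Z_T` as soon as `T` is pseudomonotone, since then `(x, 0) ∼_p (y, y*)` for `x ∈ Z_T`. -/

section WeakHalfSpace

variable {E : Type*} [AddCommGroup E] [TopologicalSpace E] [Module ℝ E]

theorem isClosed_toWeakSpace_image_setOf_le (f : StrongDual ℝ E) (c : ℝ) :
    IsClosed (toWeakSpace ℝ E '' {x | f x ≤ c}) := by
  rw [LinearEquiv.image_eq_preimage_symm]
  exact isClosed_le (WeakBilin.eval_continuous (topDualPairing ℝ E).flip f) continuous_const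

end WeakHalfSpace

section PseudoPolar

variable {X : Type*} [NormedAddCommGroup X] [NormedSpace ℝ X]

theorem pseudoRel_zero_left_iff {x : X} {q : X × StrongDual ℝ X} :
    PseudoRel (x, 0) q ↔ q.2 x ≤ q.2 q.1 := by
  simp only [PseudoRel, zero_apply, min_lt_iff, lt_irrefl, or_false,
    and_true, map_sub, sub_neg, sub_eq_zero]
  exact le_iff_lt_or_eq.symm

theorem zeros_pPolar_eq (T : Set (X × StrongDual ℝ X)) :
    zeros (pPolar T) = ⋂ q ∈ T, {x | q.2 x ≤ q.2 q.1} := by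
  ext x
  simp only [zeros, pPolar, Set.mem_ofPred_eq, Set.mem_iInter, pseudoRel_zero_left_iff]

theorem convex_zeros_pPolar (T : Set (X × StrongDual ℝ X)) : Convex ℝ (zeros (pPolar T)) := by
  rw [zeros_pPolar_eq]
  exact convex_iInter₂ fun q _ ↦ convex_halfSpace_le (q.2 : X →ₗ[ℝ] ℝ).isLinear _

theorem isClosed_toWeakSpace_image_zeros_pPolar (T : Set (X × StrongDual ℝ X)) :
    IsClosed (toWeakSpace ℝ X '' zeros (pPolar T)) := by
  rw [zeros_pPolar_eq, Set.image_iInter₂ (toWeakSpace ℝ X).bijective]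
  exact isClosed_biInter fun q _ ↦ isClosed_toWeakSpace_image_setOf_le q.2 _

theorem Pseudomonotone.zeros_subset_zeros_pPolar {T : Set (X × StrongDual ℝ X)}
    (hT : Pseudomonotone T) : zeros T ⊆ zeros (pPolar T) :=
  fun _ hx q hq ↦ hT _ hx q hq

end PseudoPolar

theorem weakClosure_convexHull_zeros_subset
    {X : Type*} [NormedAddCommGroup X] [NormedSpace ℝ X]
    (T : Set (X × StrongDual ℝ X)) (hT : Pseudomonotone T) :
    closure (toWeakSpace ℝ X '' convexHull ℝ (zeros T)) ⊆
      toWeakSpace ℝ X '' zeros (pPolar T) :=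
  closure_minimal
    (Set.image_mono (convexHull_min hT.zeros_subset_zeros_pPolar (convex_zeros_pPolar T)))
    (isClosed_toWeakSpace_image_zeros_pPolar T)
end

section
/- Let T : X ⇉ X* be a pseudomonotone operator and let P(T) be the set of maximal pseudomonotone extensions of T. Then: (1) T^ρ = ⋃_{M ∈ P(T)} M; (2) T^ρρ = ⋂_{M ∈ P(T)} M; (3) T is maximal pseudomonotone if, and only if, T = T^ρ. -/
open NormedSpace

/-!
Adding a point `p ∈ T^ρ` to `T` keeps it pseudomonotone, and Zorn's lemma extends the result to a
maximal pseudomonotone `M ∋ p`; conversely every maximal `M` satisfies `M = M^ρ ⊆ T^ρ`. This gives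
(1) and (3). Since the polar turns unions into intersections, (2) follows from (1) and `M^ρ = M`.
-/

namespace PseudoRel

variable {X : Type*} [NormedAddCommGroup X] [NormedSpace ℝ X]

lemma refl (p : X × StrongDual ℝ X) : PseudoRel p p :=
  Or.inr (by simp)

lemma symm {p q : X × StrongDual ℝ X} : PseudoRel p q → PseudoRel q p
  | .inl h => .inl (by rwa [min_comm])
  | .inr h => .inr h.symm

end PseudoRel

section Polar

variable {X : Type*} [NormedAddCommGroup X] [NormedSpace ℝ X]
  {S T M : Set (X × StrongDual ℝ X)}

lemma pseudomonotone_iff_subset_pPolar : Pseudomonotone T ↔ T ⊆ pPolar T :=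
  Iff.rfl

lemma pPolar_anti (h : S ⊆ T) : pPolar T ⊆ pPolar S :=
  fun _ hp q hq => hp q (h hq)

lemma pPolar_sUnion (𝒮 : Set (Set (X × StrongDual ℝ X))) :
    pPolar (⋃₀ 𝒮) = ⋂₀ (pPolar '' 𝒮) := by
  ext p
  simp only [pPolar, Set.mem_sUnion, Set.sInter_image, Set.mem_iInter, Set.mem_ofPred_eq]
  exact ⟨fun h S hS q hq => h q ⟨S, hS, hq⟩, fun h q ⟨S, hS, hq⟩ => h S hS q hq⟩

lemma Pseudomonotone.insert (hT : Pseudomonotone T) {p : X × StrongDual ℝ X}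
    (hp : p ∈ pPolar T) : Pseudomonotone (insert p T) := by
  rintro a (rfl | ha) b (rfl | hb)
  · exact PseudoRel.refl _
  · exact hp b hb
  · exact (hp a ha).symm
  · exact hT a ha b hb

lemma Pseudomonotone.maxPseudomonotone_iff (hT : Pseudomonotone T) :
    MaxPseudomonotone T ↔ T = pPolar T := by
  constructor
  · intro hmax
    refine Set.Subset.antisymm (pseudomonotone_iff_subset_pPolar.1 hT) fun p hp => ?_
    rw [hmax.2 _ (Set.subset_insert p T) (hT.insert hp)]
    exact Set.mem_insert p T
  · intro hT_eq
    refine ⟨hT, fun S hTS hS => hTS.antisymm fun p hp => ?_⟩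
    rw [hT_eq]
    exact pPolar_anti hTS (pseudomonotone_iff_subset_pPolar.1 hS hp)

lemma MaxPseudomonotone.eq_pPolar (hM : MaxPseudomonotone M) : M = pPolar M :=
  hM.1.maxPseudomonotone_iff.1 hM

lemma MaxPseudomonotone.subset_pPolar_of_subset (hM : MaxPseudomonotone M) (hTM : T ⊆ M) :
    M ⊆ pPolar T :=
  hM.eq_pPolar.subset.trans (pPolar_anti hTM)

lemma pseudomonotone_sUnion_of_isChain {𝒞 : Set (Set (X × StrongDual ℝ X))}
    (h𝒞 : ∀ S ∈ 𝒞, Pseudomonotone S) (hchain : IsChain (· ⊆ ·) 𝒞) : Pseudomonotone (⋃₀ 𝒞) := by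
  rintro p ⟨S, hS, hpS⟩ q ⟨S', hS', hqS'⟩
  rcases hchain.total hS hS' with h | h
  · exact h𝒞 S' hS' p (h hpS) q hqS'
  · exact h𝒞 S hS p hpS q (h hqS')

lemma Pseudomonotone.exists_maxPseudomonotone_superset (hT : Pseudomonotone T) :
    ∃ M, T ⊆ M ∧ MaxPseudomonotone M := by
  obtain ⟨M, hTM, hM⟩ := zorn_subset_nonempty {S | Pseudomonotone S}
    (fun 𝒞 h𝒞 hchain _ => ⟨⋃₀ 𝒞, pseudomonotone_sUnion_of_isChain h𝒞 hchain,
      fun _ => Set.subset_sUnion_of_mem⟩) T hT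
  exact ⟨M, hTM, hM.prop, fun S hMS hS => hMS.antisymm (hM.eq_of_subset hS hMS).ge⟩

lemma Pseudomonotone.pPolar_eq_sUnion (hT : Pseudomonotone T) :
    pPolar T = ⋃₀ {M | T ⊆ M ∧ MaxPseudomonotone M} := by
  refine Set.Subset.antisymm (fun p hp => ?_) (Set.sUnion_subset fun M ⟨hTM, hM⟩ =>
    hM.subset_pPolar_of_subset hTM)
  obtain ⟨M, hpTM, hM⟩ := (hT.insert hp).exists_maxPseudomonotone_superset
  exact ⟨M, ⟨(Set.subset_insert p T).trans hpTM, hM⟩, hpTM (Set.mem_insert p T)⟩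

end Polar

theorem pPolar_maximal_extensions
    {X : Type*} [NormedAddCommGroup X] [NormedSpace ℝ X]
    (T : Set (X × StrongDual ℝ X)) (hT : Pseudomonotone T) :
    pPolar T = ⋃₀ {M | T ⊆ M ∧ MaxPseudomonotone M} ∧
    pPolar (pPolar T) = ⋂₀ {M | T ⊆ M ∧ MaxPseudomonotone M} ∧
    (MaxPseudomonotone T ↔ T = pPolar T) := by
  have hPolar := hT.pPolar_eq_sUnion
  have hFixed : pPolar '' {M | T ⊆ M ∧ MaxPseudomonotone M} =
      {M | T ⊆ M ∧ MaxPseudomonotone M} :=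
    (Set.image_congr fun _ hM => hM.2.eq_pPolar.symm).trans (Set.image_id _)
  refine ⟨hPolar, ?_, hT.maxPseudomonotone_iff⟩
  rw [hPolar, pPolar_sUnion, hFixed]
end

section
/- Let T : X ⇉ X* be a multivalued operator such that for every α* ∈ X*, the linear perturbation T + α* (defined by (T + α*)(x) = T(x) + α*) is pre-maximal pseudomonotone. Then T is pre-maximal monotone (i.e. both T and T^μ are monotone) and T^μ is pre-maximal pseudomonotone. -/
open NormedSpace

/-! A pair violating monotonicity, `⟨x - y, x* - y*⟩ < 0`, can be shifted by a functional `α*`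
with `⟨x - y, α*⟩` the negative mean of `⟨x - y, x*⟩` and `⟨x - y, y*⟩`; then both
`⟨x - y, y* + α*⟩` and `⟨y - x, x* + α*⟩` are positive, so `T + α*` is not pseudomonotone.
Hence an operator all of whose perturbations are pseudomonotone is monotone. This applies to
`T` and, since `T^μ + α* = (T + α*)^μ ⊆ (T + α*)^ρ`, also to `T^μ`. Finally `T ⊆ T^μ` gives
`(T^μ)^ρ ⊆ T^ρ`, which is pseudomonotone. -/

section PseudoMonotonePerturbation

variable {X : Type*} [NormedAddCommGroup X] [NormedSpace ℝ X]

lemma pseudoRel_of_nonneg {p q : X × StrongDual ℝ X}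
    (h : 0 ≤ (p.2 - q.2) (p.1 - q.1)) : PseudoRel p q := by
  have hp : p.2 (q.1 - p.1) = -p.2 (p.1 - q.1) := by rw [← neg_sub, map_neg]
  rw [sub_apply] at h
  unfold PseudoRel
  rw [hp, min_lt_iff]
  by_contra! hne
  exact hne.2 (by linarith [hne.1.1]) (by linarith [hne.1.2])

lemma not_pseudoRel_of_pos {p q : X × StrongDual ℝ X}
    (hq : 0 < q.2 (p.1 - q.1)) (hp : 0 < p.2 (q.1 - p.1)) : ¬PseudoRel p q := by
  rintro (hmin | ⟨hq0, -⟩)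
  · exact (lt_min hq hp).not_gt hmin
  · exact hq.ne' hq0

lemma mPolar_subset_pPolar (T : Set (X × StrongDual ℝ X)) : mPolar T ⊆ pPolar T :=
  fun _ hp q hq => pseudoRel_of_nonneg (hp q hq)

lemma pPolar_anti_s15 {S S' : Set (X × StrongDual ℝ X)} (hs : S ⊆ S') :
    pPolar S' ⊆ pPolar S :=
  fun _ hp q hq => hp q (hs hq)

lemma Pseudomonotone.mono {S S' : Set (X × StrongDual ℝ X)} (h : Pseudomonotone S')
    (hs : S ⊆ S') : Pseudomonotone S :=
  fun p hp q hq => h p (hs hp) q (hs hq)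

lemma MonotoneOp.pseudomonotone {T : Set (X × StrongDual ℝ X)} (h : MonotoneOp T) :
    Pseudomonotone T :=
  fun p hp q hq => pseudoRel_of_nonneg (h p hp q hq)

lemma MonotoneOp.subset_mPolar {T : Set (X × StrongDual ℝ X)} (h : MonotoneOp T) :
    T ⊆ mPolar T :=
  fun p hp q hq => h p hp q hq

@[simp]
lemma mem_pertOp {T : Set (X × StrongDual ℝ X)} {α : StrongDual ℝ X}
    {p : X × StrongDual ℝ X} : p ∈ pertOp T α ↔ (p.1, p.2 - α) ∈ T := by
  constructor
  · rintro ⟨q, hq, rfl⟩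
    simpa using hq
  · intro hp
    exact ⟨_, hp, by simp⟩

@[simp]
lemma pertOp_zero (T : Set (X × StrongDual ℝ X)) : pertOp T 0 = T := by
  ext p
  simp

lemma pertOp_mPolar (T : Set (X × StrongDual ℝ X)) (α : StrongDual ℝ X) :
    pertOp (mPolar T) α = mPolar (pertOp T α) := by
  ext p
  simp only [mem_pertOp, mPolar, Set.mem_ofPred_eq]
  constructor
  · intro hp q hq
    simpa using hp _ hq
  · rintro hp ⟨y, y'⟩ hq
    have := hp (y, y' + α) (by simpa using hq)
    simp only [sub_apply, add_apply] at this ⊢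
    linarith

lemma exists_pertOp_not_pseudoRel {p q : X × StrongDual ℝ X}
    (hneg : (p.2 - q.2) (p.1 - q.1) < 0) :
    ∃ α : StrongDual ℝ X, ¬PseudoRel (p.1, p.2 + α) (q.1, q.2 + α) := by
  have hne : p.1 - q.1 ≠ 0 := by
    intro h0
    rw [h0, map_zero] at hneg
    exact hneg.false
  obtain ⟨f, hf⟩ := SeparatingDual.exists_eq_one (R := ℝ) hne
  set a := p.2 (p.1 - q.1)
  set b := q.2 (p.1 - q.1)
  rw [sub_apply] at hneg
  refine ⟨(-(a + b) / 2) • f, not_pseudoRel_of_pos ?_ ?_⟩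
  · simp only [add_apply, smul_apply, hf, smul_eq_mul]
    linarith
  · simp only [← neg_sub p.1, map_neg, add_apply, smul_apply, hf, smul_eq_mul]
    linarith

lemma monotoneOp_of_forall_pseudomonotone_pertOp {T : Set (X × StrongDual ℝ X)}
    (h : ∀ α : StrongDual ℝ X, Pseudomonotone (pertOp T α)) : MonotoneOp T := by
  intro p hp q hq
  by_contra! hneg
  obtain ⟨α, hα⟩ := exists_pertOp_not_pseudoRel hneg
  exact hα (h α _ ⟨p, hp, rfl⟩ _ ⟨q, hq, rfl⟩)

end PseudoMonotonePerturbation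

theorem preMaxMonotone_of_perturbations
    {X : Type*} [NormedAddCommGroup X] [NormedSpace ℝ X]
    (T : Set (X × StrongDual ℝ X))
    (h : ∀ α : StrongDual ℝ X, PreMaxPseudomonotone (pertOp T α)) :
    (MonotoneOp T ∧ MonotoneOp (mPolar T)) ∧ PreMaxPseudomonotone (mPolar T) := by
  have hT : MonotoneOp T := monotoneOp_of_forall_pseudomonotone_pertOp fun α => (h α).1
  have hTμ : MonotoneOp (mPolar T) := monotoneOp_of_forall_pseudomonotone_pertOp fun α =>
    (h α).2.mono (pertOp_mPolar T α ▸ mPolar_subset_pPolar _)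
  have hTρ : Pseudomonotone (pPolar T) := by simpa using (h 0).2
  exact ⟨⟨hT, hTμ⟩, hTμ.pseudomonotone, hTρ.mono (pPolar_anti_s15 hT.subset_mPolar)⟩
end
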